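/- arXiv:1907.07842 — 4 statements merged into one kernel-verified Lean document; each statement's English description precedes it below -/
import Mathlib

section
/- Let z : ℝ × ℝ → ℝ be three times continuously differentiable and solve the sine-Gordon equation z_{ys} = sin z, with cos z(y, s) ≠ 0 for all (y, s). Let x : ℝ × ℝ → ℝ be twice continuously differentiable with ∂x/∂y = cos z and ∂x/∂s = −(z_s)²/2. Suppose U : ℝ × ℝ → ℝ is twice continuously differentiable and satisfies U(x(y, s), s) = z_s(y, s) for all (y, s). Then at every point of the form (x(y, s), s), U satisfies the short pulse equation U_{xt} = U + (1/6)(U³)_{xx}. -/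
/-!
Differentiating `U (x y s) s = z_s` in `y` and using `z_{sy} = z_{ys} = sin z` together with
`x_y = cos z` gives `U_x = tan z` along the hodograph. Differentiating this in `s`, with
`x_s = -z_s²/2`, gives `U_{xt} = z_s / cos² z + (z_s²/2) U_{xx}`, while
`(U³)_{xx} = 6 U U_x² + 3 U² U_{xx}`. Since `U = z_s` and `1 + tan² z = 1 / cos² z`, the two
sides of the short pulse equation agree; `U_{xx}` cancels and never has to be computed.
-/

open Function Real

section PartialDerivatives

variable {f : ℝ → ℝ → ℝ}

theorem hasDerivAt_uncurry_comp_fderiv {c d : ℝ → ℝ} {c' d' t : ℝ}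
    (hf : DifferentiableAt ℝ (uncurry f) (c t, d t)) (hc : HasDerivAt c c' t)
    (hd : HasDerivAt d d' t) :
    HasDerivAt (fun t => f (c t) (d t)) (fderiv ℝ (uncurry f) (c t, d t) (c', d')) t :=
  (hf.hasFDerivAt.comp_hasDerivAt t (hc.prodMk hd) :)

theorem deriv_left_eq_fderiv_uncurry {a b : ℝ} (hf : DifferentiableAt ℝ (uncurry f) (a, b)) :
    deriv (fun y => f y b) a = fderiv ℝ (uncurry f) (a, b) (1, 0) :=
  (hasDerivAt_uncurry_comp_fderiv hf (hasDerivAt_id a) (hasDerivAt_const a b)).deriv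

theorem deriv_right_eq_fderiv_uncurry {a b : ℝ} (hf : DifferentiableAt ℝ (uncurry f) (a, b)) :
    deriv (fun s => f a s) b = fderiv ℝ (uncurry f) (a, b) (0, 1) :=
  (hasDerivAt_uncurry_comp_fderiv hf (hasDerivAt_const b a) (hasDerivAt_id b)).deriv

theorem DifferentiableAt.uncurry_left {a b : ℝ} (hf : DifferentiableAt ℝ (uncurry f) (a, b)) :
    DifferentiableAt ℝ (fun y => f y b) a :=
  (hasDerivAt_uncurry_comp_fderiv hf (hasDerivAt_id a) (hasDerivAt_const a b)).differentiableAt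

theorem DifferentiableAt.uncurry_right {a b : ℝ} (hf : DifferentiableAt ℝ (uncurry f) (a, b)) :
    DifferentiableAt ℝ (fun s => f a s) b :=
  (hasDerivAt_uncurry_comp_fderiv hf (hasDerivAt_const b a) (hasDerivAt_id b)).differentiableAt

theorem hasDerivAt_uncurry_comp {c d : ℝ → ℝ} {c' d' t : ℝ}
    (hf : DifferentiableAt ℝ (uncurry f) (c t, d t)) (hc : HasDerivAt c c' t)
    (hd : HasDerivAt d d' t) :
    HasDerivAt (fun t => f (c t) (d t))
      (c' * deriv (fun y => f y (d t)) (c t) + d' * deriv (fun s => f (c t) s) (d t)) t := by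
  have hsplit : ((c', d') : ℝ × ℝ) = c' • ((1, 0) : ℝ × ℝ) + d' • ((0, 1) : ℝ × ℝ) := by
    simp
  convert hasDerivAt_uncurry_comp_fderiv hf hc hd using 1
  rw [hsplit, map_add, map_smul, map_smul, smul_eq_mul, smul_eq_mul,
    deriv_left_eq_fderiv_uncurry hf, deriv_right_eq_fderiv_uncurry hf]

theorem ContDiff.uncurry_deriv_left {n : WithTop ℕ∞} (hf : ContDiff ℝ (n + 1) (uncurry f)) :
    ContDiff ℝ n (uncurry fun a b => deriv (fun y => f y b) a) := by
  have hdiff := hf.differentiable (by simp)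
  have heq : (uncurry fun a b => deriv (fun y => f y b) a) =
      fun p => fderiv ℝ (uncurry f) p (1, 0) :=
    funext fun p => deriv_left_eq_fderiv_uncurry (hdiff p)
  rw [heq]
  exact (hf.fderiv_right le_rfl).clm_apply contDiff_const

theorem deriv_deriv_comm_of_contDiff (hf : ContDiff ℝ 2 (uncurry f)) (a b : ℝ) :
    deriv (fun y => deriv (fun s => f y s) b) a =
      deriv (fun s => deriv (fun y => f y s) a) b := by
  have hdiff := hf.differentiable (by simp)
  have hdiff' : Differentiable ℝ (fderiv ℝ (uncurry f)) :=
    (hf.fderiv_right (m := 1) (by norm_num)).differentiable (by simp)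
  have hpartial_diff : ∀ v : ℝ × ℝ,
      DifferentiableAt ℝ (uncurry fun y s => fderiv ℝ (uncurry f) (y, s) v) (a, b) := fun v =>
    (hdiff' _).clm_apply (differentiableAt_const v)
  have hsecond : ∀ v w : ℝ × ℝ,
      fderiv ℝ (uncurry fun y s => fderiv ℝ (uncurry f) (y, s) v) (a, b) w =
        fderiv ℝ (fderiv ℝ (uncurry f)) (a, b) w v := fun v w => by
    change fderiv ℝ (fun p => fderiv ℝ (uncurry f) p v) (a, b) w = _
    rw [fderiv_clm_apply (hdiff' _) (differentiableAt_const v)]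
    simp
  have hright : (fun y => deriv (fun s => f y s) b) =
      fun y => fderiv ℝ (uncurry f) (y, b) (0, 1) :=
    funext fun y => deriv_right_eq_fderiv_uncurry (hdiff _)
  have hleft : (fun s => deriv (fun y => f y s) a) =
      fun s => fderiv ℝ (uncurry f) (a, s) (1, 0) :=
    funext fun s => deriv_left_eq_fderiv_uncurry (hdiff _)
  rw [hright, hleft, deriv_left_eq_fderiv_uncurry (hpartial_diff _),
    deriv_right_eq_fderiv_uncurry (hpartial_diff _), hsecond, hsecond]
  exact hf.contDiffAt.isSymmSndFDerivAt (by simp) _ _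

end PartialDerivatives

theorem deriv_deriv_pow {g : ℝ → ℝ} {a : ℝ} (n : ℕ) (hg : Differentiable ℝ g)
    (hg' : DifferentiableAt ℝ (deriv g) a) :
    deriv (fun x => deriv (fun x => g x ^ n) x) a =
      (n * (n - 1) : ℕ) * g a ^ (n - 2) * deriv g a ^ 2
        + n * g a ^ (n - 1) * deriv (deriv g) a := by
  have hfirst : (fun x => deriv (fun x => g x ^ n) x) = fun x => n * g x ^ (n - 1) * deriv g x :=
    funext fun x => ((hg x).hasDerivAt.pow n).deriv
  rw [hfirst, ((((hg a).hasDerivAt.fun_pow (n - 1)).const_mul (n : ℝ)).fun_mul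
    hg'.hasDerivAt).deriv, Nat.sub_sub]
  push_cast
  ring

theorem deriv_eq_tan_of_sineGordon_hodograph (z x U : ℝ → ℝ → ℝ)
    (hz : ContDiff ℝ 2 (uncurry z)) (hU : Differentiable ℝ (uncurry U))
    (hSG : ∀ y s : ℝ, deriv (fun s' => deriv (fun y' => z y' s') y) s = sin (z y s))
    (hcos : ∀ y s : ℝ, cos (z y s) ≠ 0)
    (hxy : ∀ y s : ℝ, deriv (fun y' => x y' s) y = cos (z y s))
    (hUz : ∀ y s : ℝ, U (x y s) s = deriv (fun s' => z y s') s) (y s : ℝ) :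
    deriv (fun x' => U x' s) (x y s) = tan (z y s) := by
  have hxy' : HasDerivAt (fun y' => x y' s) (cos (z y s)) y := by
    rw [← hxy]
    exact (differentiableAt_of_deriv_ne_zero (hxy y s ▸ hcos y s)).hasDerivAt
  have hchain := hasDerivAt_uncurry_comp (hU _) hxy' (hasDerivAt_const y s)
  rw [show (fun y' => U (x y' s) s) = fun y' => deriv (fun s' => z y' s') s from
    funext fun y' => hUz y' s] at hchain
  have hmixed := hchain.deriv
  rw [deriv_deriv_comm_of_contDiff hz, hSG] at hmixed
  rw [tan_eq_sin_div_cos, hmixed, zero_mul, add_zero, mul_div_cancel_left₀ _ (hcos y s)]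

/-- **Hodograph transformation from the sine-Gordon equation to the short pulse equation.**
If `z` is a `C³` solution of `z_{ys} = sin z` with `cos z ≠ 0` everywhere, `x(y,s)` satisfies
`x_y = cos z`, `x_s = -(z_s)²/2`, and `U` is a `C²` function with `U(x(y,s), s) = z_s(y,s)`,
then at every point `(x(y,s), s)` the function `U` satisfies the short pulse equation
`U_{xt} = U + (1/6)(U³)_{xx}`. -/
theorem hodograph_sineGordon_to_shortPulse
    (z x U : ℝ → ℝ → ℝ)
    (hz : ContDiff ℝ 3 (Function.uncurry z))
    (hx : ContDiff ℝ 2 (Function.uncurry x))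
    (hU : ContDiff ℝ 2 (Function.uncurry U))
    (hSG : ∀ y s : ℝ, deriv (fun s' => deriv (fun y' => z y' s') y) s = Real.sin (z y s))
    (hcos : ∀ y s : ℝ, Real.cos (z y s) ≠ 0)
    (hxy : ∀ y s : ℝ, deriv (fun y' => x y' s) y = Real.cos (z y s))
    (hxs : ∀ y s : ℝ, deriv (fun s' => x y s') s = -(deriv (fun s' => z y s') s) ^ 2 / 2)
    (hUz : ∀ y s : ℝ, U (x y s) s = deriv (fun s' => z y s') s) :
    ∀ y s : ℝ,
      deriv (fun t => deriv (fun x' => U x' t) (x y s)) s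
        = U (x y s) s
          + (1 / 6) * deriv (fun x' => deriv (fun x'' => (U x'' s) ^ 3) x') (x y s) := by
  intro y s
  have hU₁ : Differentiable ℝ (uncurry U) := hU.differentiable (by simp)
  have hUx : Differentiable ℝ (uncurry fun a b => deriv (fun x' => U x' b) a) :=
    (ContDiff.uncurry_deriv_left (n := 1) hU).differentiable one_ne_zero
  have htan := deriv_eq_tan_of_sineGordon_hodograph z x U (hz.of_le (by norm_num)) hU₁ hSG hcos
    hxy hUz
  have hxt : HasDerivAt (fun t => x y t) (-(deriv (fun s' => z y s') s) ^ 2 / 2) s := by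
    rw [← hxs]
    exact (hx.differentiable (by simp) _).uncurry_right.hasDerivAt
  have hzt : HasDerivAt (fun t => z y t) (deriv (fun s' => z y s') s) s :=
    (hz.differentiable (by simp) _).uncurry_right.hasDerivAt
  have hUxt := hasDerivAt_uncurry_comp (hUx _) hxt (hasDerivAt_id' s)
  rw [show (fun t => deriv (fun x' => U x' t) (x y t)) = fun t => tan (z y t) from
    funext (htan y)] at hUxt
  replace hUxt := hUxt.unique ((hasDerivAt_tan (hcos y s)).comp s hzt)
  rw [deriv_deriv_pow 3 (fun a => (hU₁ _).uncurry_left) (hUx _).uncurry_left, htan, hUz,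
    tan_eq_sin_div_cos]
  have hc := hcos y s
  field_simp at hUxt ⊢
  linear_combination 3 * hUxt - 6 * deriv (fun s' => z y s') s * sin_sq_add_cos_sq (z y s)
end

section
/- Let u : ℝ × ℝ → ℝ be a smooth (C³) function, L-periodic in x for some L > 0, satisfying the short pulse equation u_{xt} = u + (1/6)(u³)_{xx} for all (x, t). Then the invariant E_0 = ∫_0^L u(x, t)² dx is independent of t. -/
/-!
Writing `v = u_t - u² u_x / 2`, the equation says exactly `v_x = u`. Hence
`2 u u_t = 2 v_x (v + u² u_x / 2) = (v² + u⁴ / 4)_x` is the `x`-derivative of an `L`-periodic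
function, so `d/dt ∫₀ᴸ u² dx = ∫₀ᴸ 2 u u_t dx = 0`.
-/

open Function MeasureTheory Metric Set

section PartialDerivatives

variable {E : Type*} [NormedAddCommGroup E] [NormedSpace ℝ E] {f : ℝ → ℝ → E}

noncomputable def derivFst (f : ℝ → ℝ → E) (x t : ℝ) : E := deriv (f · t) x

noncomputable def derivSnd (f : ℝ → ℝ → E) (x t : ℝ) : E := deriv (f x ·) t

theorem hasDerivAt_fst_fderiv {x t : ℝ} (hf : DifferentiableAt ℝ (uncurry f) (x, t)) :
    HasDerivAt (f · t) (fderiv ℝ (uncurry f) (x, t) (1, 0)) x :=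
  (hf.hasFDerivAt.comp_hasDerivAt x ((hasDerivAt_id x).prodMk (hasDerivAt_const x t)) :)

theorem hasDerivAt_snd_fderiv {x t : ℝ} (hf : DifferentiableAt ℝ (uncurry f) (x, t)) :
    HasDerivAt (f x ·) (fderiv ℝ (uncurry f) (x, t) (0, 1)) t :=
  (hf.hasFDerivAt.comp_hasDerivAt t ((hasDerivAt_const t x).prodMk (hasDerivAt_id t)) :)

theorem hasDerivAt_derivFst (hf : Differentiable ℝ (uncurry f)) (x t : ℝ) :
    HasDerivAt (f · t) (derivFst f x t) x :=
  (hasDerivAt_fst_fderiv (hf (x, t))).differentiableAt.hasDerivAt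

theorem hasDerivAt_derivSnd (hf : Differentiable ℝ (uncurry f)) (x t : ℝ) :
    HasDerivAt (f x ·) (derivSnd f x t) t :=
  (hasDerivAt_snd_fderiv (hf (x, t))).differentiableAt.hasDerivAt

theorem uncurry_derivFst (hf : Differentiable ℝ (uncurry f)) :
    uncurry (derivFst f) = fun p => fderiv ℝ (uncurry f) p (1, 0) :=
  funext fun p => (hasDerivAt_fst_fderiv (hf p)).deriv

theorem uncurry_derivSnd (hf : Differentiable ℝ (uncurry f)) :
    uncurry (derivSnd f) = fun p => fderiv ℝ (uncurry f) p (0, 1) :=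
  funext fun p => (hasDerivAt_snd_fderiv (hf p)).deriv

theorem contDiff_uncurry_derivFst {m n : WithTop ℕ∞} (hf : ContDiff ℝ n (uncurry f))
    (hmn : m + 1 ≤ n) : ContDiff ℝ m (uncurry (derivFst f)) := by
  rw [uncurry_derivFst (hf.differentiable fun hn => by simp [hn] at hmn)]
  exact (hf.fderiv_right hmn).clm_apply contDiff_const

theorem contDiff_uncurry_derivSnd {m n : WithTop ℕ∞} (hf : ContDiff ℝ n (uncurry f))
    (hmn : m + 1 ≤ n) : ContDiff ℝ m (uncurry (derivSnd f)) := by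
  rw [uncurry_derivSnd (hf.differentiable fun hn => by simp [hn] at hmn)]
  exact (hf.fderiv_right hmn).clm_apply contDiff_const

theorem fderiv_uncurry_derivFst (hf : ContDiff ℝ 2 (uncurry f)) (p v : ℝ × ℝ) :
    fderiv ℝ (uncurry (derivFst f)) p v = fderiv ℝ (fderiv ℝ (uncurry f)) p v (1, 0) := by
  have hdiff := (hf.fderiv_right (m := 1) le_rfl).differentiable one_ne_zero
  rw [uncurry_derivFst (hf.differentiable two_ne_zero),
    fderiv_clm_apply (hdiff p) (differentiableAt_const _)]
  simp

theorem fderiv_uncurry_derivSnd (hf : ContDiff ℝ 2 (uncurry f)) (p v : ℝ × ℝ) :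
    fderiv ℝ (uncurry (derivSnd f)) p v = fderiv ℝ (fderiv ℝ (uncurry f)) p v (0, 1) := by
  have hdiff := (hf.fderiv_right (m := 1) le_rfl).differentiable one_ne_zero
  rw [uncurry_derivSnd (hf.differentiable two_ne_zero),
    fderiv_clm_apply (hdiff p) (differentiableAt_const _)]
  simp

theorem derivSnd_derivFst_comm (hf : ContDiff ℝ 2 (uncurry f)) (x t : ℝ) :
    derivSnd (derivFst f) x t = derivFst (derivSnd f) x t := by
  have hFst := (contDiff_uncurry_derivFst (m := 1) hf le_rfl).differentiable one_ne_zero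
  have hSnd := (contDiff_uncurry_derivSnd (m := 1) hf le_rfl).differentiable one_ne_zero
  calc derivSnd (derivFst f) x t
      = fderiv ℝ (fderiv ℝ (uncurry f)) (x, t) (0, 1) (1, 0) := by
        rw [← fderiv_uncurry_derivFst hf]; exact (hasDerivAt_snd_fderiv (hFst _)).deriv
    _ = fderiv ℝ (fderiv ℝ (uncurry f)) (x, t) (1, 0) (0, 1) :=
        hf.contDiffAt.isSymmSndFDerivAt (by simp) _ _
    _ = derivFst (derivSnd f) x t := by
        rw [← fderiv_uncurry_derivSnd hf]; exact (hasDerivAt_fst_fderiv (hSnd _)).deriv.symm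

theorem derivFst_periodic {L : ℝ} (hf : ∀ t, Periodic (f · t) L) (t : ℝ) :
    Periodic (derivFst f · t) L := fun x => by
  simp only [derivFst]
  rw [← deriv_comp_add_const]
  exact congrArg (deriv · x) (funext (hf t))

theorem derivSnd_periodic {L : ℝ} (hf : ∀ t, Periodic (f · t) L) (t : ℝ) :
    Periodic (derivSnd f · t) L := fun x =>
  congrArg (deriv · t) (funext fun t' => hf t' x)

theorem hasDerivAt_intervalIntegral_of_contDiff (hf : ContDiff ℝ 1 (uncurry f)) (a b t₀ : ℝ) :
    HasDerivAt (fun t => ∫ x in a..b, f x t) (∫ x in a..b, derivSnd f x t₀) t₀ := by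
  have hslice : ∀ {g : ℝ → ℝ → E}, Continuous (uncurry g) → ∀ t, Continuous (g · t) :=
    fun hg t => hg.comp (continuous_id.prodMk continuous_const)
  have hf' : Continuous (uncurry (derivSnd f)) :=
    (contDiff_uncurry_derivSnd (m := 0) hf le_rfl).continuous
  obtain ⟨M, hM⟩ : ∃ M, ∀ p ∈ uIcc a b ×ˢ closedBall t₀ 1, ‖uncurry (derivSnd f) p‖ ≤ M :=
    (isCompact_uIcc.prod (isCompact_closedBall t₀ 1)).exists_bound_of_continuousOn
      hf'.continuousOn
  refine (intervalIntegral.hasDerivAt_integral_of_dominated_loc_of_deriv_le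
    (F := fun t x => f x t) (F' := fun t x => derivSnd f x t) (bound := fun _ => M)
    (μ := volume) (ball_mem_nhds t₀ one_pos) ?_
    ((hslice hf.continuous t₀).intervalIntegrable a b)
    (hslice hf' t₀).aestronglyMeasurable ?_ intervalIntegrable_const ?_).2
  · exact .of_forall fun t => (hslice hf.continuous t).aestronglyMeasurable
  · exact .of_forall fun x hx t ht => hM (x, t) ⟨uIoc_subset_uIcc hx, ball_subset_closedBall ht⟩
  · exact .of_forall fun x _ t _ => hasDerivAt_derivSnd (hf.differentiable one_ne_zero) x t

end PartialDerivatives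

theorem Function.Periodic.intervalIntegral_deriv_eq_zero {E : Type*} [NormedAddCommGroup E]
    [NormedSpace ℝ E] [CompleteSpace E] {g g' : ℝ → E} {L : ℝ} (hg : Periodic g L)
    (hderiv : ∀ x, HasDerivAt g (g' x) x) (a : ℝ) (hint : IntervalIntegrable g' volume a (a + L)) :
    ∫ x in a..a + L, g' x = 0 := by
  rw [intervalIntegral.integral_eq_sub_of_hasDerivAt (fun x _ => hderiv x) hint, hg a, sub_self]

def IsShortPulseSolution (u : ℝ → ℝ → ℝ) : Prop :=
  ∀ x t, derivSnd (derivFst u) x t = u x t + 1 / 6 * derivFst (derivFst fun x t => u x t ^ 3) x t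

noncomputable def shortPulseFlux (u : ℝ → ℝ → ℝ) (x t : ℝ) : ℝ :=
  derivSnd u x t - u x t ^ 2 * derivFst u x t / 2

section ShortPulse

variable {u : ℝ → ℝ → ℝ} (hu : ContDiff ℝ 2 (uncurry u))
include hu

theorem IsShortPulseSolution.hasDerivAt_shortPulseFlux (hsol : IsShortPulseSolution u) (x t : ℝ) :
    HasDerivAt (shortPulseFlux u · t) (u x t) x := by
  have hdiff := hu.differentiable (by norm_num)
  have hux : ContDiff ℝ 1 (uncurry (derivFst u)) := contDiff_uncurry_derivFst hu (by norm_num)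
  have hut : ContDiff ℝ 1 (uncurry (derivSnd u)) := contDiff_uncurry_derivSnd hu (by norm_num)
  set w : ℝ → ℝ → ℝ := fun x t => u x t ^ 2 * derivFst u x t
  have hw : Differentiable ℝ (uncurry w) :=
    (hdiff.pow 2).mul (hux.differentiable (by norm_num))
  have hcube : derivFst (fun x t => u x t ^ 3) = fun x t => 3 * w x t := by
    ext x t
    rw [derivFst, ((hasDerivAt_derivFst hdiff x t).fun_pow 3).deriv]
    ring
  have hflux : derivFst (derivSnd u) x t = u x t + derivFst w x t / 2 := by
    rw [← derivSnd_derivFst_comm hu, hsol, hcube]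
    simp only [derivFst, deriv_const_mul_field']
    ring
  exact ((hasDerivAt_derivFst (hut.differentiable (by norm_num)) x t).sub
    ((hasDerivAt_derivFst hw x t).div_const 2)).congr_deriv (by rw [hflux]; ring)

theorem IsShortPulseSolution.hasDerivAt_shortPulseFlux_sq_add (hsol : IsShortPulseSolution u)
    (x t : ℝ) :
    HasDerivAt (fun x => shortPulseFlux u x t ^ 2 + u x t ^ 4 / 4)
      (2 * u x t * derivSnd u x t) x := by
  have hux := hasDerivAt_derivFst (hu.differentiable (by norm_num)) x t
  exact (((hsol.hasDerivAt_shortPulseFlux hu x t).fun_pow 2).add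
    ((hux.fun_pow 4).div_const 4)).congr_deriv (by simp only [shortPulseFlux]; ring)

theorem IsShortPulseSolution.integral_mul_derivSnd_eq_zero (hsol : IsShortPulseSolution u)
    {L : ℝ} (hper : ∀ t, Periodic (u · t) L) (t : ℝ) :
    ∫ x in (0 : ℝ)..L, 2 * u x t * derivSnd u x t = 0 := by
  have hflux : Periodic (shortPulseFlux u · t) L := fun x => by
    simp only [shortPulseFlux, hper t x, derivFst_periodic hper t x, derivSnd_periodic hper t x]
  have hcont : Continuous fun x => 2 * u x t * derivSnd u x t :=
    ((continuous_const.mul hu.continuous).mul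
      (contDiff_uncurry_derivSnd (m := 0) hu (by norm_num)).continuous).comp
      (continuous_id.prodMk continuous_const)
  simpa using Periodic.intervalIntegral_deriv_eq_zero
    (g := fun x => shortPulseFlux u x t ^ 2 + u x t ^ 4 / 4)
    (fun x => by simp only [hflux x, hper t x]) (hsol.hasDerivAt_shortPulseFlux_sq_add hu · t) 0
    (hcont.intervalIntegrable _ _)

theorem IsShortPulseSolution.hasDerivAt_integral_sq (hsol : IsShortPulseSolution u) {L : ℝ}
    (hper : ∀ t, Periodic (u · t) L) (t : ℝ) :
    HasDerivAt (fun t => ∫ x in (0 : ℝ)..L, u x t ^ 2) 0 t := by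
  have hsq : derivSnd (fun x t => u x t ^ 2) = fun x t => 2 * u x t * derivSnd u x t := by
    ext x t
    rw [derivSnd, ((hasDerivAt_derivSnd (hu.differentiable (by norm_num)) x t).fun_pow 2).deriv]
    ring
  have h := hasDerivAt_intervalIntegral_of_contDiff (f := fun x t => u x t ^ 2)
    ((hu.pow 2).of_le (by norm_num)) 0 L t
  rwa [hsq, hsol.integral_mul_derivSnd_eq_zero hu hper] at h

end ShortPulse

theorem shortPulse_E0_conserved_general
    (u : ℝ → ℝ → ℝ) (L : ℝ)
    (hu : ContDiff ℝ 3 (Function.uncurry u))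
    (hper : ∀ x t : ℝ, u (x + L) t = u x t)
    (heq : ∀ x t : ℝ, deriv (fun t' => deriv (fun x' => u x' t') x) t
      = u x t + (1 / 6) * deriv (fun x' => deriv (fun x'' => (u x'' t) ^ 3) x') x) :
    ∀ t₁ t₂ : ℝ,
      (∫ x in (0:ℝ)..L, (u x t₁) ^ 2) = ∫ x in (0:ℝ)..L, (u x t₂) ^ 2 := by
  have hE := IsShortPulseSolution.hasDerivAt_integral_sq (hu.of_le (by norm_num)) heq
    fun t x => hper x t
  exact is_const_of_deriv_eq_zero (fun t => (hE t).differentiableAt) fun t => (hE t).deriv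

/-- **Conservation of `E₀ = ∫ u² dx` for the short pulse equation.**
If `u` is `C³`, `L`-periodic in `x`, and solves `u_{xt} = u + (1/6)(u³)_{xx}`,
then `∫_0^L u(x,t)² dx` does not depend on `t`. -/
theorem shortPulse_E0_conserved
    (u : ℝ → ℝ → ℝ) (L : ℝ) (hL : 0 < L)
    (hu : ContDiff ℝ 3 (Function.uncurry u))
    (hper : ∀ x t : ℝ, u (x + L) t = u x t)
    (heq : ∀ x t : ℝ, deriv (fun t' => deriv (fun x' => u x' t') x) t
      = u x t + (1 / 6) * deriv (fun x' => deriv (fun x'' => (u x'' t) ^ 3) x') x) :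
    ∀ t₁ t₂ : ℝ,
      (∫ x in (0:ℝ)..L, (u x t₁) ^ 2) = ∫ x in (0:ℝ)..L, (u x t₂) ^ 2 :=
  shortPulse_E0_conserved_general u L hu hper heq
end

section
/- Let u : ℝ × ℝ → ℝ be a smooth (C³) function, L-periodic in x for some L > 0, satisfying the short pulse equation u_{xt} = u + (1/6)(u³)_{xx} for all (x, t). Then the invariant E_1 = ∫_0^L √(1 + u_x(x, t)²) dx is independent of t. In fact, ∂_t √(1 + u_x²) = ∂_x[(u²/2)√(1 + u_x²)] pointwise. -/
/-!
Along each line `x = const`, `∂_t √(1 + u_x²) = u_x u_{xt} / √(1 + u_x²)`. Substituting the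
equation in the form `u_{xt} = u + u u_x² + (u²/2) u_{xx}` turns the right-hand side into
`∂_x [(u²/2) √(1 + u_x²)]`, so `√(1 + u_x²)` is a conserved density with a flux.
Integrating over one period, the flux terms cancel by periodicity, hence `dE₁/dt = 0`;
differentiation under the integral sign is justified because `∂_t √(1 + u_x²)` is continuous
in `(x, t)`.
-/

open Function MeasureTheory

variable {E : Type*} [NormedAddCommGroup E] [NormedSpace ℝ E]

noncomputable def partialX (f : ℝ → ℝ → E) (x t : ℝ) : E := deriv (fun x' => f x' t) x

noncomputable def partialT (f : ℝ → ℝ → E) (x t : ℝ) : E := deriv (fun t' => f x t') t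

section PartialDerivatives

variable {f : ℝ → ℝ → E}

theorem hasDerivAt_fderiv_apply_fst {x t : ℝ} (hf : DifferentiableAt ℝ (uncurry f) (x, t)) :
    HasDerivAt (fun x' => f x' t) (fderiv ℝ (uncurry f) (x, t) (1, 0)) x :=
  hf.hasFDerivAt.comp_hasDerivAt (l := uncurry f) x
    ((hasDerivAt_id x).prodMk (hasDerivAt_const x t))

theorem hasDerivAt_fderiv_apply_snd {x t : ℝ} (hf : DifferentiableAt ℝ (uncurry f) (x, t)) :
    HasDerivAt (fun t' => f x t') (fderiv ℝ (uncurry f) (x, t) (0, 1)) t :=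
  hf.hasFDerivAt.comp_hasDerivAt (l := uncurry f) t
    ((hasDerivAt_const t x).prodMk (hasDerivAt_id t))

theorem ContDiff.hasDerivAt_partialX {n : WithTop ℕ∞} (hf : ContDiff ℝ n (uncurry f))
    (hn : n ≠ 0) (x t : ℝ) : HasDerivAt (fun x' => f x' t) (partialX f x t) x :=
  (hasDerivAt_fderiv_apply_fst (hf.differentiable hn _)).differentiableAt.hasDerivAt

theorem ContDiff.hasDerivAt_partialT {n : WithTop ℕ∞} (hf : ContDiff ℝ n (uncurry f))
    (hn : n ≠ 0) (x t : ℝ) : HasDerivAt (fun t' => f x t') (partialT f x t) t :=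
  (hasDerivAt_fderiv_apply_snd (hf.differentiable hn _)).differentiableAt.hasDerivAt

theorem ContDiff.uncurry_partialX {n : WithTop ℕ∞} (hf : ContDiff ℝ (n + 1) (uncurry f)) :
    ContDiff ℝ n (uncurry (partialX f)) := by
  have hfx : uncurry (partialX f) = fun p => fderiv ℝ (uncurry f) p (1, 0) :=
    funext fun p => (hasDerivAt_fderiv_apply_fst (hf.differentiable (by simp) p)).deriv
  rw [hfx]
  exact (hf.fderiv_right le_rfl).clm_apply contDiff_const

theorem ContDiff.uncurry_partialT {n : WithTop ℕ∞} (hf : ContDiff ℝ (n + 1) (uncurry f)) :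
    ContDiff ℝ n (uncurry (partialT f)) := by
  have hft : uncurry (partialT f) = fun p => fderiv ℝ (uncurry f) p (0, 1) :=
    funext fun p => (hasDerivAt_fderiv_apply_snd (hf.differentiable (by simp) p)).deriv
  rw [hft]
  exact (hf.fderiv_right le_rfl).clm_apply contDiff_const

theorem partialX_add_period {L : ℝ} (hper : ∀ x t, f (x + L) t = f x t) (x t : ℝ) :
    partialX f (x + L) t = partialX f x t := by
  simp only [partialX, ← deriv_comp_add_const, hper]

end PartialDerivatives

section ConservationLaw

variable {ρ ρ' : ℝ → ℝ → E} {a b : ℝ}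

theorem hasDerivAt_intervalIntegral_of_continuous_deriv (hρ : ∀ t, Continuous fun x => ρ x t)
    (hρ' : Continuous (uncurry ρ')) (hρt : ∀ x t, HasDerivAt (fun t' => ρ x t') (ρ' x t) t)
    (t₀ : ℝ) :
    HasDerivAt (fun t => ∫ x in a..b, ρ x t) (∫ x in a..b, ρ' x t₀) t₀ := by
  have hK : IsCompact (Set.uIcc a b ×ˢ Metric.closedBall t₀ 1) :=
    isCompact_uIcc.prod (isCompact_closedBall t₀ 1)
  obtain ⟨C, hC⟩ := hK.exists_bound_of_continuousOn hρ'.continuousOn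
  refine (intervalIntegral.hasDerivAt_integral_of_dominated_loc_of_deriv_le (bound := fun _ => C)
    (Metric.ball_mem_nhds t₀ one_pos) (.of_forall fun t => (hρ t).aestronglyMeasurable)
    ((hρ t₀).intervalIntegrable a b) (hρ'.uncurry_right t₀).aestronglyMeasurable ?_
    intervalIntegrable_const (ae_of_all _ fun x _ t _ => hρt x t)).2
  exact ae_of_all _ fun x hx t ht =>
    hC (x, t) ⟨Set.uIoc_subset_uIcc hx, Metric.ball_subset_closedBall ht⟩

theorem intervalIntegral_eq_of_hasDerivAt_flux [CompleteSpace E] {J : ℝ → ℝ → E}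
    (hρ : ∀ t, Continuous fun x => ρ x t) (hρ' : Continuous (uncurry ρ'))
    (hρt : ∀ x t, HasDerivAt (fun t' => ρ x t') (ρ' x t) t)
    (hJx : ∀ x t, HasDerivAt (fun x' => J x' t) (ρ' x t) x) (hJ : ∀ t, J b t = J a t)
    (t₁ t₂ : ℝ) :
    ∫ x in a..b, ρ x t₁ = ∫ x in a..b, ρ x t₂ := by
  have hflux : ∀ t, ∫ x in a..b, ρ' x t = 0 := fun t => by
    rw [intervalIntegral.integral_eq_sub_of_hasDerivAt (fun x _ => hJx x t)
      ((hρ'.uncurry_right t).intervalIntegrable a b), hJ, sub_self]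
  have hderiv := hasDerivAt_intervalIntegral_of_continuous_deriv (a := a) (b := b) hρ hρ' hρt
  exact is_const_of_deriv_eq_zero (fun t => (hderiv t).differentiableAt)
    (fun t => (hderiv t).deriv.trans (hflux t)) t₁ t₂

end ConservationLaw

section ShortPulse

open Real

theorem deriv_deriv_cube {g g' : ℝ → ℝ} {g'' x : ℝ} (hg : ∀ y, HasDerivAt g (g' y) y)
    (hg' : HasDerivAt g' g'' x) :
    deriv (fun y => deriv (fun z => g z ^ 3) y) x = 6 * g x * g' x ^ 2 + 3 * g x ^ 2 * g'' := by
  have hcube : (fun y => deriv (fun z => g z ^ 3) y) = fun y => 3 * (g y ^ 2 * g' y) :=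
    funext fun y => by
      rw [((hg y).fun_pow 3).deriv]
      push_cast
      ring
  rw [hcube]
  have := (((hg x).fun_pow 2).fun_mul hg').const_mul 3
  rw [this.deriv]
  push_cast
  ring

theorem hasDerivAt_sqrt_one_add_sq {g : ℝ → ℝ} {g' s : ℝ} (hg : HasDerivAt g g' s) :
    HasDerivAt (fun y => √(1 + g y ^ 2)) (g s * g' / √(1 + g s ^ 2)) s := by
  convert ((hg.fun_pow 2).const_add 1).sqrt (by positivity) using 1
  field_simp
  ring

theorem hasDerivAt_shortPulse_flux {u ux : ℝ → ℝ} {uxx uxt x : ℝ}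
    (hu : HasDerivAt u (ux x) x) (hux : HasDerivAt ux uxx x)
    (heq : uxt = u x + u x * ux x ^ 2 + u x ^ 2 / 2 * uxx) :
    HasDerivAt (fun y => u y ^ 2 / 2 * √(1 + ux y ^ 2)) (ux x * uxt / √(1 + ux x ^ 2)) x := by
  have hu2 : HasDerivAt (fun y => u y ^ 2 / 2) (u x * ux x) x :=
    ((hu.fun_pow 2).div_const 2).congr_deriv (by ring)
  refine (hu2.fun_mul (hasDerivAt_sqrt_one_add_sq hux)).congr_deriv ?_
  have hS : √(1 + ux x ^ 2) ^ 2 = 1 + ux x ^ 2 := sq_sqrt (by positivity)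
  rw [heq]
  field_simp
  linear_combination 2 * u x * ux x * hS

end ShortPulse

theorem shortPulse_E1_conserved_general
    (u : ℝ → ℝ → ℝ) (L : ℝ)
    (hu : ContDiff ℝ 3 (Function.uncurry u))
    (hper : ∀ x t : ℝ, u (x + L) t = u x t)
    (heq : ∀ x t : ℝ, deriv (fun t' => deriv (fun x' => u x' t') x) t
      = u x t + (1 / 6) * deriv (fun x' => deriv (fun x'' => (u x'' t) ^ 3) x') x) :
    (∀ t₁ t₂ : ℝ,
      (∫ x in (0:ℝ)..L, Real.sqrt (1 + (deriv (fun x' => u x' t₁) x) ^ 2))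
        = ∫ x in (0:ℝ)..L, Real.sqrt (1 + (deriv (fun x' => u x' t₂) x) ^ 2)) ∧
    (∀ x t : ℝ,
      deriv (fun t' => Real.sqrt (1 + (deriv (fun x' => u x' t') x) ^ 2)) t
        = deriv (fun x' => (u x' t) ^ 2 / 2
            * Real.sqrt (1 + (deriv (fun x'' => u x'' t) x') ^ 2)) x) := by
  have hux : ContDiff ℝ 2 (uncurry (partialX u)) := hu.uncurry_partialX
  have hdu := hu.hasDerivAt_partialX (by norm_num)
  have hduxx := hux.hasDerivAt_partialX (by norm_num)
  have hduxt := hux.hasDerivAt_partialT (by norm_num)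
  have hpde : ∀ x t, partialT (partialX u) x t = u x t + u x t * partialX u x t ^ 2
      + u x t ^ 2 / 2 * partialX (partialX u) x t := fun x t => by
    refine (heq x t).trans ?_
    rw [deriv_deriv_cube (hdu · t) (hduxx x t)]
    ring
  have hρt x t := hasDerivAt_sqrt_one_add_sq (hduxt x t)
  have hJx x t := hasDerivAt_shortPulse_flux (hdu x t) (hduxx x t) (hpde x t)
  have hux_cont : Continuous (uncurry (partialX u)) := hux.continuous
  have huxt_cont : Continuous (uncurry (partialT (partialX u))) :=
    (hux.uncurry_partialT (n := 1)).continuous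
  refine ⟨intervalIntegral_eq_of_hasDerivAt_flux (fun t => ?_) ?_ hρt hJx fun t => ?_,
    fun x t => (hρt x t).deriv.trans (hJx x t).deriv.symm⟩
  · exact (((hux_cont.uncurry_right t).pow 2).const_add 1).sqrt
  · exact (hux_cont.mul huxt_cont).div (((hux_cont.pow 2).const_add 1).sqrt) fun p => by positivity
  · simpa using congr($(hper 0 t) ^ 2 / 2 * √(1 + $(partialX_add_period hper 0 t) ^ 2))

/-- **Conservation of `E₁ = ∫ √(1 + u_x²) dx` for the short pulse equation.**
If `u` is `C³`, `L`-periodic in `x`, and solves `u_{xt} = u + (1/6)(u³)_{xx}`,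
then `∫_0^L √(1 + u_x(x,t)²) dx` does not depend on `t`; in fact the pointwise identity
`∂_t √(1 + u_x²) = ∂_x [(u²/2)√(1 + u_x²)]` holds. -/
theorem shortPulse_E1_conserved
    (u : ℝ → ℝ → ℝ) (L : ℝ) (hL : 0 < L)
    (hu : ContDiff ℝ 3 (Function.uncurry u))
    (hper : ∀ x t : ℝ, u (x + L) t = u x t)
    (heq : ∀ x t : ℝ, deriv (fun t' => deriv (fun x' => u x' t') x) t
      = u x t + (1 / 6) * deriv (fun x' => deriv (fun x'' => (u x'' t) ^ 3) x') x) :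
    (∀ t₁ t₂ : ℝ,
      (∫ x in (0:ℝ)..L, Real.sqrt (1 + (deriv (fun x' => u x' t₁) x) ^ 2))
        = ∫ x in (0:ℝ)..L, Real.sqrt (1 + (deriv (fun x' => u x' t₂) x) ^ 2)) ∧
    (∀ x t : ℝ,
      deriv (fun t' => Real.sqrt (1 + (deriv (fun x' => u x' t') x) ^ 2)) t
        = deriv (fun x' => (u x' t) ^ 2 / 2
            * Real.sqrt (1 + (deriv (fun x'' => u x'' t) x') ^ 2)) x) :=
  shortPulse_E1_conserved_general u L hu hper heq
end

section
/- Let ρ : ℝ × ℝ → ℝ and u : ℝ × ℝ → ℂ be smooth (C²) functions, L-periodic in y for some L > 0, satisfying the complex coupled dispersionless system ρ_s + (|u|²/2)_y = 0 and u_{ys} = ρu for all (y, s). Then the conserved quantity H_1 = ∫_0^L (ρ(y, s)² + |u_y(y, s)|²) dy is independent of s. In fact, ∂_s(ρ² + |u_y|²) = 0 pointwise. -/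
/-! Differentiating, `∂_s(ρ² + |u_y|²) = 2ρρ_s + 2⟪u_y, u_{ys}⟫ = 2ρ(ρ_s + ⟪u, u_y⟫)`, using the
second equation `u_{ys} = ρu`; and `⟪u, u_y⟫ = (|u|²/2)_y`, so the first equation makes the bracket
vanish. The density is therefore constant in `s` at every `y`, and so is its integral over any
interval. -/

open Function

section PartialDerivatives

variable {E : Type*} [NormedAddCommGroup E] [NormedSpace ℝ E]

theorem hasDerivAt_uncurry_left {f : ℝ → ℝ → E} {y s : ℝ}
    (hf : DifferentiableAt ℝ (uncurry f) (y, s)) :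
    HasDerivAt (fun y' => f y' s) (fderiv ℝ (uncurry f) (y, s) (1, 0)) y := by
  exact hf.hasFDerivAt.comp_hasDerivAt y ((hasDerivAt_id' y).prodMk (hasDerivAt_const y s))

theorem differentiableAt_uncurry_right {f : ℝ → ℝ → E} {y s : ℝ}
    (hf : DifferentiableAt ℝ (uncurry f) (y, s)) :
    DifferentiableAt ℝ (fun s' => f y s') s :=
  hf.comp s ((differentiableAt_const y).prodMk differentiableAt_id)

theorem differentiable_deriv_left_of_contDiff_two {f : ℝ → ℝ → E}
    (hf : ContDiff ℝ 2 (uncurry f)) (y : ℝ) :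
    Differentiable ℝ (fun s => deriv (fun y' => f y' s) y) := by
  have hfd : Differentiable ℝ (uncurry f) := hf.differentiable (by norm_num)
  have hpartial : (fun s => deriv (fun y' => f y' s) y)
      = fun s => fderiv ℝ (uncurry f) (y, s) (1, 0) :=
    funext fun s => (hasDerivAt_uncurry_left (hfd (y, s))).deriv
  have hC1 : ContDiff ℝ 1 (fun p : ℝ × ℝ => fderiv ℝ (uncurry f) p (1, 0)) :=
    (hf.fderiv_right le_rfl).clm_apply contDiff_const
  rw [hpartial]
  exact (hC1.differentiable one_ne_zero).comp
    ((differentiable_const y).prodMk differentiable_id)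

end PartialDerivatives

section Energy

variable {E : Type*} [NormedAddCommGroup E] [InnerProductSpace ℝ E]

theorem hasDerivAt_sq_add_norm_sq_eq_zero {r : ℝ → ℝ} {w : ℝ → E} {r' s : ℝ} {v : E}
    (hr : HasDerivAt r r' s) (hw : HasDerivAt w (r s • v) s)
    (hbalance : r' + inner ℝ v (w s) = 0) :
    HasDerivAt (fun t => r t ^ 2 + ‖w t‖ ^ 2) 0 s := by
  refine ((hr.pow 2).add hw.norm_sq).congr_deriv ?_
  calc _ = 2 * r s * (r' + inner ℝ v (w s)) := by
        rw [real_inner_smul_right, real_inner_comm]; push_cast; ring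
    _ = 0 := by rw [hbalance, mul_zero]

theorem hasDerivAt_H1_density_eq_zero {ρ : ℝ → ℝ → ℝ} {u : ℝ → ℝ → E}
    (hρ : Differentiable ℝ (uncurry ρ)) (hu : ContDiff ℝ 2 (uncurry u))
    (hCD1 : ∀ y s : ℝ,
      deriv (fun s' => ρ y s') s + deriv (fun y' => ‖u y' s‖ ^ 2 / 2) y = 0)
    (hCD2 : ∀ y s : ℝ,
      deriv (fun s' => deriv (fun y' => u y' s') y) s = ρ y s • u y s)
    (y s : ℝ) :
    HasDerivAt (fun s' => ρ y s' ^ 2 + ‖deriv (fun y' => u y' s') y‖ ^ 2) 0 s := by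
  have hu_y : HasDerivAt (fun y' => u y' s) (deriv (fun y' => u y' s) y) y :=
    (hasDerivAt_uncurry_left (hu.differentiable (by norm_num) (y, s))).differentiableAt.hasDerivAt
  have hhalf_norm_sq : deriv (fun y' => ‖u y' s‖ ^ 2 / 2) y
      = inner ℝ (u y s) (deriv (fun y' => u y' s) y) := by
    rw [(hu_y.norm_sq.div_const 2).deriv]; ring
  refine hasDerivAt_sq_add_norm_sq_eq_zero (v := u y s)
    (differentiableAt_uncurry_right (hρ (y, s))).hasDerivAt ?_ ?_
  · rw [← hCD2]
    exact (differentiable_deriv_left_of_contDiff_two hu y s).hasDerivAt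
  · rw [← hhalf_norm_sq]
    exact hCD1 y s

end Energy

theorem complexCD_H1_conserved_general
    (ρ : ℝ → ℝ → ℝ) (u : ℝ → ℝ → ℂ) (L : ℝ)
    (hρ : ContDiff ℝ 2 (Function.uncurry ρ))
    (hu : ContDiff ℝ 2 (Function.uncurry u))
    (hCD1 : ∀ y s : ℝ,
      deriv (fun s' => ρ y s') s + deriv (fun y' => (‖u y' s‖) ^ 2 / 2) y = 0)
    (hCD2 : ∀ y s : ℝ,
      deriv (fun s' => deriv (fun y' => u y' s') y) s = (ρ y s : ℂ) * u y s) :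
    (∀ s₁ s₂ : ℝ,
      (∫ y in (0:ℝ)..L, ((ρ y s₁) ^ 2 + (‖deriv (fun y' => u y' s₁) y‖) ^ 2))
        = ∫ y in (0:ℝ)..L, ((ρ y s₂) ^ 2 + (‖deriv (fun y' => u y' s₂) y‖) ^ 2)) ∧
    (∀ y s : ℝ,
      deriv (fun s' => (ρ y s') ^ 2 + (‖deriv (fun y' => u y' s') y‖) ^ 2) s
        = 0) := by
  have hdensity := hasDerivAt_H1_density_eq_zero (hρ.differentiable (by norm_num)) hu hCD1
    (fun y s => by rw [hCD2, Complex.real_smul])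
  refine ⟨fun s₁ s₂ => intervalIntegral.integral_congr fun y _ => ?_,
    fun y s => (hdensity y s).deriv⟩
  exact is_const_of_deriv_eq_zero (fun s => (hdensity y s).differentiableAt)
    (fun s => (hdensity y s).deriv) s₁ s₂

/-- **Conservation of `H₁ = ∫ (ρ² + |u_y|²) dy` for the complex coupled dispersionless system.**
If `ρ` (real) and `u` (complex) are `C²`, `L`-periodic-in-`y` solutions of
`ρ_s + (|u|²/2)_y = 0`, `u_{ys} = ρu`, then `∫_0^L (ρ² + |u_y|²) dy` does not depend on `s`;
in fact `∂_s(ρ² + |u_y|²) = 0` pointwise. -/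
theorem complexCD_H1_conserved
    (ρ : ℝ → ℝ → ℝ) (u : ℝ → ℝ → ℂ) (L : ℝ) (hL : 0 < L)
    (hρ : ContDiff ℝ 2 (Function.uncurry ρ))
    (hu : ContDiff ℝ 2 (Function.uncurry u))
    (hperρ : ∀ y s : ℝ, ρ (y + L) s = ρ y s)
    (hperu : ∀ y s : ℝ, u (y + L) s = u y s)
    (hCD1 : ∀ y s : ℝ,
      deriv (fun s' => ρ y s') s + deriv (fun y' => (‖u y' s‖) ^ 2 / 2) y = 0)
    (hCD2 : ∀ y s : ℝ,
      deriv (fun s' => deriv (fun y' => u y' s') y) s = (ρ y s : ℂ) * u y s) :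
    (∀ s₁ s₂ : ℝ,
      (∫ y in (0:ℝ)..L, ((ρ y s₁) ^ 2 + (‖deriv (fun y' => u y' s₁) y‖) ^ 2))
        = ∫ y in (0:ℝ)..L, ((ρ y s₂) ^ 2 + (‖deriv (fun y' => u y' s₂) y‖) ^ 2)) ∧
    (∀ y s : ℝ,
      deriv (fun s' => (ρ y s') ^ 2 + (‖deriv (fun y' => u y' s') y‖) ^ 2) s
        = 0) :=
  complexCD_H1_conserved_general ρ u L hρ hu hCD1 hCD2
end
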